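/- arXiv:1306.5503 — 2 statements merged into one kernel-verified Lean document; each statement's English description precedes it below -/
import Mathlib

section
/- Let (V, I) be an interval system such that the lattice D(V, I) of interval decompositions has finite length. Then D(V, I) is a strong lattice: for every join-irreducible element j of D(V, I) and every x ∈ D(V, I), j ≤ j* ∨ x implies j ≤ x. -/
variable {V : Type*}

/-- `Q` is a closure system on `V`: it contains `V` and is closed under
intersections of nonempty subfamilies. -/
def IsClosureSystem (Q : Set (Set V)) : Prop :=
  Set.univ ∈ Q ∧ ∀ F ⊆ Q, F.Nonempty → ⋂₀ F ∈ Q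

/-- Algebraic: the union of any nonempty chain of closed sets is closed. -/
def IsAlgebraicSystem (Q : Set (Set V)) : Prop :=
  ∀ C ⊆ Q, C.Nonempty → IsChain (· ⊆ ·) C → ⋃₀ C ∈ Q

/-- Condition (I₀): the empty set and all singletons are closed. -/
def CondI0 (Q : Set (Set V)) : Prop := ∅ ∈ Q ∧ ∀ x : V, {x} ∈ Q

/-- Condition (I₁): the union of two intersecting members is a member. -/
def CondI1 (Q : Set (Set V)) : Prop :=
  ∀ A ∈ Q, ∀ B ∈ Q, (A ∩ B).Nonempty → A ∪ B ∈ Q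

/-- Condition (I₂): differences of properly overlapping members are members. -/
def CondI2 (Q : Set (Set V)) : Prop :=
  ∀ A ∈ Q, ∀ B ∈ Q, (A ∩ B).Nonempty → ¬ A ⊆ B → ¬ B ⊆ A → A \ B ∈ Q ∧ B \ A ∈ Q

/-- An interval system: an algebraic closure system satisfying (I₀), (I₁), (I₂). -/
def IsIntervalSystem (Q : Set (Set V)) : Prop :=
  IsClosureSystem Q ∧ IsAlgebraicSystem Q ∧ CondI0 Q ∧ CondI1 Q ∧ CondI2 Q

/-- `A` is a strong set of the closure system `Q`. -/
def IsStrong (Q : Set (Set V)) (A : Set V) : Prop :=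
  A ∈ Q ∧ ∀ B ∈ Q, (A ∩ B).Nonempty → A ⊆ B ∨ B ⊆ A

/-- A decomposition: a partition of `V` (coded as a setoid) all of whose
blocks belong to `Q`.  The refinement order on partitions corresponds to the
order on `Setoid V` (finer below). -/
def IsDecomp (Q : Set (Set V)) (π : Setoid V) : Prop :=
  ∀ x : V, {y | π.r x y} ∈ Q

/-- The lattice `D(V,Q)` of decompositions, as a subtype of `Setoid V`
with the induced (refinement) partial order. -/
abbrev Decomp (Q : Set (Set V)) := {π : Setoid V // IsDecomp Q π}

/-!
In finite length, a join-irreducible decomposition `j` has a unique lower cover `j*`, so every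
decomposition below `j` is either `j` or below `j*`. Testing this on the decomposition whose only
nontrivial block is a block of `j` containing two points that `j*` separates shows that `j` has a
single nontrivial block `J`. Then `j* ⊔ (j ⊓ x)` lies below `j`; it cannot lie below `j*`, since
a chain of `j*`- and `x`-steps joining two points of `J` can leave `J` only through `x`-steps
(`j*` is trivial outside `J`), which compose, while the `x`-steps inside `J` are `j ⊓ x`-steps.
Hence `j = j* ⊔ (j ⊓ x)`, and join-irreducibility gives `j = j ⊓ x ≤ x`.
-/

theorem Setoid.mem_of_sup_rel {r s : Setoid V} {Z : Set V}
    (hr : ∀ p q, r p q → p ∈ Z → q ∈ Z) (hs : ∀ p q, s p q → p ∈ Z → q ∈ Z)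
    {p q : V} (hpq : (r ⊔ s) p q) (hp : p ∈ Z) : q ∈ Z := by
  have hker : r ⊔ s ≤ Setoid.ker (· ∈ Z) :=
    sup_le (fun p q h => propext ⟨hr p q h, hr q p (r.symm h)⟩)
      (fun p q h => propext ⟨hs p q h, hs q p (s.symm h)⟩)
  have hZ : (p ∈ Z) = (q ∈ Z) := hker hpq
  exact hZ ▸ hp

def blockSetoid (J : Set V) : Setoid V where
  r p q := p = q ∨ (p ∈ J ∧ q ∈ J)
  iseqv := by
    refine ⟨fun p => Or.inl rfl, ?_, ?_⟩
    · rintro p q (rfl | ⟨hp, hq⟩)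
      exacts [Or.inl rfl, Or.inr ⟨hq, hp⟩]
    · rintro p q r (rfl | ⟨hp, hq⟩) hqr
      · exact hqr
      · rcases hqr with rfl | ⟨-, hr⟩
        exacts [Or.inr ⟨hp, hq⟩, Or.inr ⟨hp, hr⟩]

theorem blockSetoid_le_iff {J : Set V} {r : Setoid V} :
    blockSetoid J ≤ r ↔ ∀ p ∈ J, ∀ q ∈ J, r p q := by
  refine ⟨fun h p hp q hq => h (Or.inr ⟨hp, hq⟩), fun h p q hpq => ?_⟩
  rcases hpq with rfl | ⟨hp, hq⟩
  exacts [r.refl p, h p hp q hq]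

theorem blockSetoid_le_of_le_sup {J : Set V} {r x : Setoid V} (hr : r ≤ blockSetoid J)
    (hx : blockSetoid J ⊓ x ≤ r) (h : blockSetoid J ≤ r ⊔ x) : blockSetoid J ≤ r := by
  rw [blockSetoid_le_iff] at h ⊢
  intro u hu v hv
  have hxJ : ∀ p ∈ J, ∀ q ∈ J, x p q → r p q := fun p hp q hq hpq => hx ⟨Or.inr ⟨hp, hq⟩, hpq⟩
  have hJ : ∀ p, r u p → p ∈ J := fun p hup => by
    rcases hr hup with rfl | ⟨-, hp⟩
    exacts [hu, hp]
  let Z : Set V := {w | ∃ p, r u p ∧ x p w}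
  have hZr : ∀ w q, r w q → w ∈ Z → q ∈ Z := by
    rintro w q hwq ⟨p, hup, hpw⟩
    rcases hr hwq with rfl | ⟨hw, hq⟩
    · exact ⟨p, hup, hpw⟩
    · exact ⟨q, r.trans (r.trans hup (hxJ p (hJ p hup) w hw hpw)) hwq, x.refl q⟩
  have hZx : ∀ w q, x w q → w ∈ Z → q ∈ Z := by
    rintro w q hwq ⟨p, hup, hpw⟩
    exact ⟨p, hup, x.trans hpw hwq⟩
  obtain ⟨p, hup, hpv⟩ := Setoid.mem_of_sup_rel hZr hZx (h u hu v hv) ⟨u, r.refl u, x.refl u⟩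
  exact r.trans hup (hxJ p (hJ p hup) v hv hpv)

theorem IsClosureSystem.inter_mem {Q : Set (Set V)} (hQ : IsClosureSystem Q) {A B : Set V}
    (hA : A ∈ Q) (hB : B ∈ Q) : A ∩ B ∈ Q := by
  simpa using hQ.2 {A, B} (Set.pair_subset hA hB) (Set.insert_nonempty A {B})

section Decomp

variable {I : Set (Set V)}

theorem IsDecomp.inf (hclos : IsClosureSystem I) {a b : Setoid V} (ha : IsDecomp I a)
    (hb : IsDecomp I b) : IsDecomp I (a ⊓ b) :=
  fun p => hclos.inter_mem (ha p) (hb p)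

/-- The class of `u` in `a ⊔ b` is the largest member of `I` containing `u` inside that class:
such a maximal member exists by Zorn's lemma, and by (I₁) it absorbs every `a`- and `b`-class
it meets. -/
theorem IsDecomp.sup (halg : IsAlgebraicSystem I) (hI1 : CondI1 I) {a b : Setoid V}
    (ha : IsDecomp I a) (hb : IsDecomp I b) : IsDecomp I (a ⊔ b) := by
  intro u
  let C : Set V := {w | (a ⊔ b) u w}
  let S : Set (Set V) := {W | W ∈ I ∧ u ∈ W ∧ W ⊆ C}
  have hS : {w | a u w} ∈ S := ⟨ha u, a.refl u, fun w hw => (le_sup_left : a ≤ a ⊔ b) hw⟩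
  obtain ⟨W, -, ⟨hWI, huW, hWC⟩, hWmax⟩ := zorn_subset_nonempty S
    (fun c hcS hchain hc => ⟨⋃₀ c, ⟨halg c (fun A hA => (hcS hA).1) hc hchain,
        hc.elim fun A hA => ⟨A, hA, (hcS hA).2.1⟩,
        Set.sUnion_subset fun A hA => (hcS hA).2.2⟩,
      fun _ => Set.subset_sUnion_of_mem⟩) _ hS
  have hsat : ∀ c : Setoid V, IsDecomp I c → c ≤ a ⊔ b → ∀ p q, c p q → p ∈ W → q ∈ W := by
    intro c hc hcle p q hpq hp
    have hclass : {w | c p w} ⊆ C := fun w hw => (a ⊔ b).trans (hWC hp) (hcle hw)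
    exact hWmax ⟨hI1 _ hWI _ (hc p) ⟨p, hp, c.refl p⟩, Or.inl huW,
      Set.union_subset hWC hclass⟩ Set.subset_union_left (Or.inr hpq)
  have hCW : C = W := Set.Subset.antisymm
    (fun w hw => Setoid.mem_of_sup_rel (hsat a ha le_sup_left) (hsat b hb le_sup_right) hw huW)
    hWC
  change C ∈ I
  rwa [hCW]

theorem isDecomp_bot (hI0 : ∀ x : V, {x} ∈ I) : IsDecomp I ⊥ := by
  intro p
  convert hI0 p using 1
  exact Set.ext fun q => eq_comm

theorem isDecomp_blockSetoid (hI0 : ∀ x : V, {x} ∈ I) {J : Set V} (hJ : J ∈ I) :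
    IsDecomp I (blockSetoid J) := by
  intro p
  by_cases hp : p ∈ J
  · convert hJ using 1
    exact Set.ext fun q => ⟨by rintro (rfl | ⟨-, hq⟩) <;> assumption, fun hq => Or.inr ⟨hp, hq⟩⟩
  · convert hI0 p using 1
    exact Set.ext fun q => ⟨by rintro (rfl | ⟨hp', -⟩); exacts [rfl, absurd hp' hp],
      fun hq => Or.inl hq.symm⟩

/-- Not an instance, so that the order on `Decomp I` in the statement below stays the plain
subtype order. -/
abbrev Decomp.lattice (hclos : IsClosureSystem I) (halg : IsAlgebraicSystem I)
    (hI1 : CondI1 I) : Lattice (Decomp I) :=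
  Subtype.lattice (fun _ _ => IsDecomp.sup halg hI1) (fun _ _ => IsDecomp.inf hclos)

theorem Decomp.exists_eq_blockSetoid (hI0 : ∀ x : V, {x} ∈ I) {j jstar : Decomp I}
    (hstar : IsGreatest {y | y < j} jstar) : ∃ J, j.1 = blockSetoid J := by
  obtain ⟨u, v, huv, hnot⟩ : ∃ u v, j.1 u v ∧ ¬ jstar.1 u v := by
    by_contra! h
    exact hstar.1.not_ge (show j ≤ jstar from fun {p q} hpq => h p q hpq)
  let J : Set V := {w | j.1 u w}
  let b : Decomp I := ⟨blockSetoid J, isDecomp_blockSetoid hI0 (j.2 u)⟩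
  have hbj : b ≤ j := blockSetoid_le_iff.2 fun p hp q hq => j.1.trans (j.1.symm hp) hq
  have hb : b = j := hbj.eq_of_not_lt fun hlt =>
    hnot (hstar.2 hlt (Or.inr ⟨j.1.refl u, huv⟩))
  exact ⟨J, congrArg Subtype.val hb.symm⟩

end Decomp

theorem wellFoundedGT_of_forall_length_le {α : Type*} [Preorder α]
    (h : ∃ n : ℕ, ∀ c : LTSeries α, c.length ≤ n) : WellFoundedGT α := by
  obtain ⟨n, hn⟩ := h
  rw [WellFoundedGT, isWellFounded_iff, RelEmbedding.wellFounded_iff_isEmpty]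
  refine ⟨fun f => ?_⟩
  have := hn (LTSeries.mk (n + 1) (fun i => f i) fun _ _ hab => f.map_rel_iff.2 hab)
  exact n.lt_succ_self.not_ge this

theorem SupIrred.exists_isGreatest_lt {α : Type*} [Lattice α] [WellFoundedGT α] {j : α}
    (hj : SupIrred j) : ∃ m, IsGreatest {y | y < j} m := by
  obtain ⟨m, hmj, hmax⟩ := wellFounded_gt.has_min {y | y < j} (not_isMin_iff.1 hj.not_isMin)
  refine ⟨m, hmj, fun y hy => ?_⟩
  have hlt : y ⊔ m < j :=
    (sup_le hy.le hmj.le).lt_of_ne fun h => (hj.2 h).elim hy.ne hmj.ne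
  exact le_sup_left.trans (le_sup_right.eq_of_not_lt (hmax _ hlt)).ge

/-- If `D(V,I)` has finite length then it is a strong lattice: for every
join-irreducible `j` and every `x`, `j ≤ j* ∨ x` implies `j ≤ x`
(joins in `D(V,I)` are expressed as least upper bounds). -/
theorem stmt16 (I : Set (Set V)) (hI : IsIntervalSystem I)
    (hfl : ∃ n : ℕ, ∀ c : LTSeries (Decomp I), c.length ≤ n)
    (j : Decomp I)
    (hj : j.1 ≠ ⊥ ∧ ∀ a b : Decomp I, IsLUB {a, b} j → j = a ∨ j = b)
    (jstar : Decomp I) (hstar : IsLUB {y : Decomp I | y < j} jstar)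
    (x s : Decomp I) (hs : IsLUB {jstar, x} s) (hle : j ≤ s) :
    j ≤ x := by
  let := Decomp.lattice hI.1 hI.2.1 hI.2.2.2.1
  have : WellFoundedGT (Decomp I) := wellFoundedGT_of_forall_length_le hfl
  have hI0 := hI.2.2.1.2
  have hirr : SupIrred j := by
    refine ⟨fun hmin => hj.1 (le_bot_iff.1 (hmin (bot_le : (⊥ : Setoid V) ≤ j.1) :
      j ≤ ⟨⊥, isDecomp_bot hI0⟩)), fun a b hab => ?_⟩
    exact (hj.2 a b (hab ▸ isLUB_pair)).imp Eq.symm Eq.symm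
  obtain ⟨m, hm⟩ := hirr.exists_isGreatest_lt
  obtain rfl : jstar = m := hstar.unique hm.isLUB
  obtain rfl : s = jstar ⊔ x := hs.unique isLUB_pair
  obtain ⟨J, hJ⟩ := Decomp.exists_eq_blockSetoid hI0 hm
  have hlt : jstar < j := hm.1
  have hsup : jstar ⊔ (j ⊓ x) = j := by
    refine (sup_le hlt.le inf_le_left).eq_of_not_lt fun hsup_lt => hlt.not_ge ?_
    have htj : j ⊓ x ≤ jstar := le_sup_right.trans (hm.2 hsup_lt)
    have key := blockSetoid_le_of_le_sup (J := J) (r := jstar.1) (x := x.1)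
      (hJ ▸ hlt.le) (hJ ▸ htj) (hJ ▸ hle)
    exact (hJ ▸ key : j.1 ≤ jstar.1)
  rcases hirr.2 hsup with h | h
  · exact absurd h hlt.ne
  · exact h ▸ inf_le_right
end

section
/- Let (V, I) be an interval system with D(V, I) of finite length. Then D(V, I) is balanced: for every join-irreducible j and meet-irreducible m with j ≰ m, one has j ∨ m = m* if and only if j ∧ m = j*, where j* is the lower cover of j and m* is the upper cover of m. -/
variable {V : Type*}

/-!
Finite length makes `j*` the unique lower cover of `j` and `m*` the unique upper cover of `m`.
Decompositions form a complete sublattice of the partition lattice of `V`: meets are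
intersections of blocks, and the block of `x` in a join of decompositions is a maximal member
of `I` containing `x` inside the join block, which (I₁) forces to be a union of blocks.
In this lattice a join-irreducible `j` is a partition with a single nontrivial block `B`, and
such partitions are modular from below: `(π ⊔ ρ) ⊓ j ≤ ρ` whenever `π ⊓ j ≤ ρ ≤ j`.

If `j ⊔ m = m*` but `j* ≰ m`, then `m* ≤ m ⊔ j*`, so `j ≤ m ⊔ j*`, and modularity applied to
`j ⊓ m ≤ j* < j` gives `j ≤ j*`; hence `j* = j ⊓ m`. Conversely, if `j ⊓ m = j*` and
`m < σ < j ⊔ m`, then `σ` joins two `m`-blocks meeting `B` in points `a, b`; either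
`j ⊓ σ < j`, so `j ⊓ σ ≤ j* ≤ m` puts `a, b` into one `m`-block, or `j ≤ σ`. So `j ⊔ m`
covers `m`, i.e. `j ⊔ m = m*`.
-/

theorem FiniteDimensionalOrder.of_forall_length_le {α : Type*} [Preorder α] [Nonempty α]
    (h : ∃ n : ℕ, ∀ c : LTSeries α, c.length ≤ n) : FiniteDimensionalOrder α := by
  obtain ⟨n, hn⟩ := h
  refine not_infiniteDimensionalOrder_iff.1 fun hinf => ?_
  obtain ⟨c, hc⟩ := hinf.exists_relSeries_with_length (n + 1)
  exact absurd (hn c) (by omega)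

instance FiniteDimensionalOrder.wellFoundedLT {α : Type*} [Preorder α]
    [FiniteDimensionalOrder α] : WellFoundedLT α :=
  ⟨SetRel.IsWellFounded.of_finiteDimensional {(a, b) : α × α | a < b}⟩

instance FiniteDimensionalOrder.wellFoundedGT {α : Type*} [Preorder α]
    [FiniteDimensionalOrder α] : WellFoundedGT α :=
  ⟨SetRel.IsWellFounded.inv_of_finiteDimensional {(a, b) : α × α | a < b}⟩

section Irreducible

variable {α : Type*} [Lattice α] {a j m : α}

theorem SupIrred.isGreatest_of_covBy (hj : SupIrred j) (ha : a ⋖ j) :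
    IsGreatest {b | b < j} a := by
  refine ⟨ha.lt, fun b hb => ?_⟩
  by_contra hba
  have hsup : a ⊔ b = j :=
    ((ha.eq_or_eq le_sup_left (sup_le ha.le hb.le)).resolve_left
      fun h => hba (h ▸ le_sup_right))
  exact (hj.2 hsup).elim ha.ne (ne_of_lt hb)

theorem SupIrred.covBy_of_isLUB [WellFoundedGT α] (hj : SupIrred j) {c : α}
    (hc : IsLUB {b | b < j} c) : c ⋖ j := by
  obtain ⟨a, ha⟩ := exists_covBy_of_wellFoundedGT hj.not_isMin
  have hac : a = c := (hj.isGreatest_of_covBy ha).isLUB.unique hc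
  exact hac ▸ ha

theorem InfIrred.covBy_of_isGLB [WellFoundedLT α] (hm : InfIrred m) {c : α}
    (hc : IsGLB {b | m < b} c) : m ⋖ c :=
  toDual_covBy_toDual_iff.1 <| SupIrred.covBy_of_isLUB (supIrred_toDual.2 hm) hc

end Irreducible

namespace Setoid

def ofBlock (A : Set V) : Setoid V where
  r x y := x = y ∨ (x ∈ A ∧ y ∈ A)
  iseqv := by
    refine ⟨fun _ => Or.inl rfl, fun h => h.imp Eq.symm And.symm, ?_⟩
    rintro x y z (rfl | ⟨hx, hy⟩) (rfl | ⟨hy', hz⟩)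
    exacts [Or.inl rfl, Or.inr ⟨hy', hz⟩, Or.inr ⟨hx, hy⟩, Or.inr ⟨hx, hz⟩]

theorem ofBlock_apply {A : Set V} {x y : V} : ofBlock A x y ↔ x = y ∨ (x ∈ A ∧ y ∈ A) :=
  Iff.rfl

theorem ofBlock_sup_apply {π : Setoid V} {A : Set V} {x y : V} (h : (ofBlock A ⊔ π) x y) :
    π x y ∨ ((∃ w ∈ A, π x w) ∧ ∃ w ∈ A, π y w) := by
  classical
  let f : V → Option (Quotient π) := fun x => if ∃ w ∈ A, π x w then none else some ⟦x⟧
  have hle : ofBlock A ⊔ π ≤ ker f := by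
    refine sup_le (fun x y hxy => ?_) (fun x y hxy => ?_)
    · rcases hxy with rfl | ⟨hx, hy⟩
      · rfl
      · simp only [ker_def, f, if_pos (⟨x, hx, π.refl' x⟩ : ∃ w ∈ A, π x w),
          if_pos (⟨y, hy, π.refl' y⟩ : ∃ w ∈ A, π y w)]
    · have hxy' : (∃ w ∈ A, π x w) ↔ ∃ w ∈ A, π y w :=
        exists_congr fun w => and_congr_right fun _ => ⟨π.trans' (π.symm' hxy), π.trans' hxy⟩
      simp only [ker_def, f, hxy', Quotient.sound hxy]
  have hf : f x = f y := hle h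
  simp only [f] at hf
  split_ifs at hf with hx hy hy
  · exact Or.inr ⟨hx, hy⟩
  · exact Or.inl (Quotient.exact (Option.some.inj hf))

theorem sup_inf_ofBlock_le {π ρ : Setoid V} {A : Set V} (hρ : ρ ≤ ofBlock A)
    (hπ : π ⊓ ofBlock A ≤ ρ) : (π ⊔ ρ) ⊓ ofBlock A ≤ ρ := by
  classical
  have hπA : ∀ {x y}, x ∈ A → y ∈ A → π x y → ρ x y := fun hx hy h => hπ ⟨h, Or.inr ⟨hx, hy⟩⟩
  -- `g x` is the `ρ`-class of any `π`-partner of `x` in `A`: by `hπ` the choice does not matter.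
  let g : V → Quotient ρ ⊕ Quotient π := fun x =>
    if h : ∃ w ∈ A, π x w then .inl ⟦h.choose⟧ else .inr ⟦x⟧
  have hg : ∀ x ∈ A, g x = .inl ⟦x⟧ := fun x hx => by
    have h : ∃ w ∈ A, π x w := ⟨x, hx, π.refl' x⟩
    simp only [g, dif_pos h]
    exact congrArg _ (Quotient.sound (ρ.symm' (hπA hx h.choose_spec.1 h.choose_spec.2)))
  have hle : π ⊔ ρ ≤ ker g := by
    refine sup_le (fun x y hxy => ?_) (fun x y hxy => ?_)
    · by_cases hx : ∃ w ∈ A, π x w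
      · have hy : ∃ w ∈ A, π y w := hx.imp fun w hw => ⟨hw.1, π.trans' (π.symm' hxy) hw.2⟩
        simp only [ker_def, g, dif_pos hx, dif_pos hy]
        refine congrArg _ (Quotient.sound (hπA hx.choose_spec.1 hy.choose_spec.1 ?_))
        exact π.trans' (π.symm' hx.choose_spec.2) (π.trans' hxy hy.choose_spec.2)
      · have hy : ¬ ∃ w ∈ A, π y w := fun hy =>
          hx (hy.imp fun w hw => ⟨hw.1, π.trans' hxy hw.2⟩)
        simp only [ker_def, g, dif_neg hx, dif_neg hy]
        exact congrArg _ (Quotient.sound hxy)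
    · rcases hρ hxy with rfl | ⟨hx, hy⟩
      · rfl
      · rw [ker_def, hg x hx, hg y hy]
        exact congrArg _ (Quotient.sound hxy)
  rintro x y ⟨hxy, rfl | ⟨hx, hy⟩⟩
  · exact ρ.refl' x
  · have h : g x = g y := hle hxy
    rw [hg x hx, hg y hy] at h
    exact Quotient.exact (Sum.inl.inj h)

end Setoid

section IsDecomp

variable {I : Set (Set V)}

theorem IsClosureSystem.isDecomp_sInf (hI : IsClosureSystem I) {S : Set (Setoid V)}
    (hS : ∀ π ∈ S, IsDecomp I π) : IsDecomp I (sInf S) := by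
  intro x
  have hblock :
      {y | (sInf S) x y} = ⋂₀ insert Set.univ ((fun π : Setoid V => {y | π x y}) '' S) := by
    ext y
    simp [Setoid.sInf_def]
  rw [hblock]
  refine hI.2 _ ?_ ⟨_, Set.mem_insert _ _⟩
  rintro _ (rfl | ⟨π, hπ, rfl⟩)
  exacts [hI.1, hS π hπ x]

theorem IsAlgebraicSystem.isDecomp_sSup (halg : IsAlgebraicSystem I) (h0 : CondI0 I)
    (h1 : CondI1 I) {S : Set (Setoid V)} (hS : ∀ π ∈ S, IsDecomp I π) :
    IsDecomp I (sSup S) := by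
  intro x
  set K := {y | (sSup S) x y}
  obtain ⟨A, hxA, hA⟩ := zorn_subset_nonempty {A | A ∈ I ∧ A ⊆ K}
    (fun C hC hchain hne => ⟨⋃₀ C, ⟨halg C (fun A hA => (hC hA).1) hne hchain,
      Set.sUnion_subset fun A hA => (hC hA).2⟩, fun _ => Set.subset_sUnion_of_mem⟩)
    {x} ⟨h0.2 x, Set.singleton_subset_iff.2 ((sSup S).refl' x)⟩
  have hsat : ∀ π ∈ S, ∀ {a b}, a ∈ A → π a b → b ∈ A := by
    intro π hπ a b ha hab
    have hblock : {c | π a c} ⊆ K := fun c hc => (sSup S).trans' (hA.1.2 ha) (le_sSup hπ hc)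
    refine hA.2 ⟨h1 A hA.1.1 _ (hS π hπ a) ⟨a, ha, π.refl' a⟩, Set.union_subset hA.1.2 hblock⟩
      Set.subset_union_left (Or.inr hab)
  have hKA : K ⊆ A := by
    have hle : sSup S ≤ Setoid.ker (· ∈ A) := sSup_le fun π hπ a b hab =>
      propext ⟨fun ha => hsat π hπ ha hab, fun hb => hsat π hπ hb (π.symm' hab)⟩
    exact fun y hy => cast (Setoid.ker_def.1 (hle hy)) (hxA rfl)
  exact (hA.1.2.antisymm hKA) ▸ hA.1.1

theorem CondI0.isDecomp_ofBlock (h0 : CondI0 I) {A : Set V} (hA : A ∈ I) :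
    IsDecomp I (Setoid.ofBlock A) := by
  intro x
  by_cases hx : x ∈ A
  · convert hA using 1
    ext y
    exact ⟨fun h => h.elim (· ▸ hx) And.right, fun hy => Or.inr ⟨hx, hy⟩⟩
  · convert h0.2 x using 1
    ext y
    simp [Setoid.ofBlock_apply, hx, eq_comm]

theorem IsDecomp.inf_ofBlock_compl {π : Setoid V} (hπ : IsDecomp I π) (h0 : CondI0 I) (x₀ : V) :
    IsDecomp I (π ⊓ Setoid.ofBlock {y | π x₀ y}ᶜ) := by
  intro x
  by_cases hx : π x₀ x
  · convert h0.2 x using 1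
    ext y
    simp only [Set.mem_ofPred_eq, Setoid.inf_iff_and, Setoid.ofBlock_apply, Set.mem_compl_iff,
      hx, not_true_eq_false, false_and, or_false, Set.mem_singleton_iff]
    exact ⟨fun h => h.2.symm, fun h => ⟨h ▸ π.refl' x, h.symm⟩⟩
  · convert hπ x using 1
    ext y
    exact ⟨And.left, fun h => ⟨h, Or.inr ⟨hx, fun hy => hx (π.trans' hy (π.symm' h))⟩⟩⟩

end IsDecomp

namespace Decomp

variable {I : Set (Set V)} [hI : Fact (IsIntervalSystem I)]

instance : CompleteLattice (Decomp I) :=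
  have hsSup : ∀ S, (∀ π ∈ S, IsDecomp I π) → IsDecomp I (sSup S) := fun _ =>
    IsAlgebraicSystem.isDecomp_sSup hI.out.2.1 hI.out.2.2.1 hI.out.2.2.2.1
  have hsInf : ∀ S, (∀ π ∈ S, IsDecomp I π) → IsDecomp I (sInf S) := fun _ =>
    IsClosureSystem.isDecomp_sInf hI.out.1
  letI : Max (Decomp I) := ⟨fun a b => ⟨a.1 ⊔ b.1, sSup_pair (a := a.1) ▸
    hsSup _ (by rintro _ (rfl | rfl) <;> simp [a.2, b.2])⟩⟩
  letI : Min (Decomp I) := ⟨fun a b => ⟨a.1 ⊓ b.1, sInf_pair (a := a.1) ▸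
    hsInf _ (by rintro _ (rfl | rfl) <;> simp [a.2, b.2])⟩⟩
  letI : SupSet (Decomp I) := ⟨fun S => ⟨sSup (Subtype.val '' S),
    hsSup _ (by rintro _ ⟨a, -, rfl⟩; exact a.2)⟩⟩
  letI : InfSet (Decomp I) := ⟨fun S => ⟨sInf (Subtype.val '' S),
    hsInf _ (by rintro _ ⟨a, -, rfl⟩; exact a.2)⟩⟩
  letI : Top (Decomp I) := ⟨⟨⊤, sInf_empty (α := Setoid V) ▸ hsInf _ (by simp)⟩⟩
  letI : Bot (Decomp I) := ⟨⟨⊥, sSup_empty (α := Setoid V) ▸ hsSup _ (by simp)⟩⟩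
  Subtype.val_injective.completeLattice _ Iff.rfl Iff.rfl (fun _ _ => rfl) (fun _ _ => rfl)
    (fun _ => sSup_image) (fun _ => sInf_image) rfl rfl

theorem exists_val_eq_ofBlock_of_supIrred {j : Decomp I} (hj : SupIrred j) :
    ∃ B : Set V, j.1 = Setoid.ofBlock B := by
  obtain ⟨x₀, y₀, hxy, hne⟩ : ∃ x₀ y₀, j.1 x₀ y₀ ∧ x₀ ≠ y₀ := by
    by_contra! h
    refine hj.not_isMin (isMin_iff_eq_bot.2 (Subtype.ext (Setoid.ext fun x y => ?_)))
    exact ⟨h x y, fun hxy => hxy ▸ j.1.refl' x⟩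
  set B := {y | j.1 x₀ y}
  let a : Decomp I := ⟨Setoid.ofBlock B, hI.out.2.2.1.isDecomp_ofBlock (j.2 x₀)⟩
  let b : Decomp I := ⟨j.1 ⊓ Setoid.ofBlock Bᶜ, j.2.inf_ofBlock_compl hI.out.2.2.1 x₀⟩
  have hab : a ⊔ b = j := by
    refine le_antisymm (sup_le ?_ fun x y hxy => hxy.1) fun x y hxy => ?_
    · rintro x y (rfl | ⟨hx, hy⟩)
      exacts [j.1.refl' x, j.1.trans' (j.1.symm' hx) hy]
    · by_cases hx : x ∈ B
      · exact (le_sup_left : a ≤ a ⊔ b) (Or.inr ⟨hx, j.1.trans' hx hxy⟩)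
      · exact (le_sup_right : b ≤ a ⊔ b)
          ⟨hxy, Or.inr ⟨hx, fun hy => hx (j.1.trans' hy (j.1.symm' hxy))⟩⟩
  rcases hj.2 hab with h | h
  · exact ⟨B, congrArg Subtype.val h.symm⟩
  · have hb : b.1 x₀ y₀ := h ▸ hxy
    rcases hb.2 with h' | ⟨hx₀, -⟩
    exacts [(hne h').elim, (hx₀ (j.1.refl' x₀)).elim]

theorem covBy_sup_of_forall_lt_le {j m : Decomp I} {B : Set V} (hjB : j.1 = Setoid.ofBlock B)
    (hjm : ¬ j ≤ m) (hlow : ∀ ρ < j, ρ ≤ m) : m ⋖ j ⊔ m := by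
  refine ⟨right_lt_sup.2 hjm, fun σ hmσ hσ => ?_⟩
  obtain ⟨a, b, hab, hnab⟩ : ∃ a b, σ.1 a b ∧ ¬ m.1 a b := by
    by_contra! h
    exact hmσ.not_ge fun a b => h a b
  have hs : (Setoid.ofBlock B ⊔ m.1) a b := hjB ▸ hσ.le hab
  obtain ⟨⟨wa, hwa, hawa⟩, ⟨wb, hwb, hbwb⟩⟩ := (Setoid.ofBlock_sup_apply hs).resolve_left hnab
  rcases (inf_le_left : j ⊓ σ ≤ j).lt_or_eq with hlt | heq
  · have hσw : σ.1 wa wb := σ.1.trans' (σ.1.symm' (hmσ.le hawa)) (σ.1.trans' hab (hmσ.le hbwb))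
    have hmw : m.1 wa wb := hlow _ hlt ⟨hjB ▸ Or.inr ⟨hwa, hwb⟩, hσw⟩
    exact hnab (m.1.trans' hawa (m.1.trans' hmw (m.1.symm' hbwb)))
  · exact hσ.not_ge (sup_le (inf_eq_left.1 heq) hmσ.le)

theorem not_le_sup_of_inf_le {j m ρ : Decomp I} {B : Set V} (hjB : j.1 = Setoid.ofBlock B)
    (hρ : ρ < j) (hjm : j ⊓ m ≤ ρ) : ¬ j ≤ m ⊔ ρ := by
  intro h
  have hρB : ρ.1 ≤ Setoid.ofBlock B := hjB ▸ hρ.le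
  have hmB : m.1 ⊓ Setoid.ofBlock B ≤ ρ.1 := hjB ▸ inf_comm j.1 m.1 ▸ hjm
  refine hρ.not_ge fun x y hxy => Setoid.sup_inf_ofBlock_le hρB hmB ⟨h hxy, ?_⟩
  exact hjB ▸ hxy

end Decomp

/-- `D(V,I)` of finite length is balanced: for every join-irreducible `j` and
meet-irreducible `m` with `j ≰ m`, `j ∨ m = m*` iff `j ∧ m = j*`, where
`j*` is the lower cover of `j` (the join of all elements below `j`) and `m*`
the upper cover of `m` (the meet of all elements above `m`). -/
theorem stmt17 (I : Set (Set V)) (hI : IsIntervalSystem I)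
    (hfl : ∃ n : ℕ, ∀ c : LTSeries (Decomp I), c.length ≤ n)
    (j m : Decomp I)
    (hj : j.1 ≠ ⊥ ∧ ∀ a b : Decomp I, IsLUB {a, b} j → j = a ∨ j = b)
    (hm : m.1 ≠ ⊤ ∧ ∀ a b : Decomp I, IsGLB {a, b} m → m = a ∨ m = b)
    (hnle : ¬ j ≤ m)
    (jstar : Decomp I) (hjstar : IsLUB {y : Decomp I | y < j} jstar)
    (mstar : Decomp I) (hmstar : IsGLB {y : Decomp I | m < y} mstar)
    (s t : Decomp I) (hs : IsLUB {j, m} s) (ht : IsGLB {j, m} t) :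
    s = mstar ↔ t = jstar := by
  have : Fact (IsIntervalSystem I) := ⟨hI⟩
  have : Nonempty (Decomp I) := ⟨j⟩
  have := FiniteDimensionalOrder.of_forall_length_le hfl
  have hjirr : SupIrred j := ⟨fun h => hj.1 (congrArg Subtype.val (isMin_iff_eq_bot.1 h)),
    fun a b h => (hj.2 a b (h ▸ isLUB_pair)).imp Eq.symm Eq.symm⟩
  have hmirr : InfIrred m := ⟨fun h => hm.1 (congrArg Subtype.val (isMax_iff_eq_top.1 h)),
    fun a b h => (hm.2 a b (h ▸ isGLB_pair)).imp Eq.symm Eq.symm⟩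
  obtain ⟨B, hjB⟩ := Decomp.exists_val_eq_ofBlock_of_supIrred hjirr
  have hjstar_cov : jstar ⋖ j := hjirr.covBy_of_isLUB hjstar
  have hmstar_cov : m ⋖ mstar := hmirr.covBy_of_isGLB hmstar
  obtain rfl : s = j ⊔ m := hs.unique isLUB_pair
  obtain rfl : t = j ⊓ m := ht.unique isGLB_pair
  have hinf : j ⊓ m ≤ jstar := hjstar.1 (inf_lt_left.2 hnle)
  constructor
  · intro hsup
    have hjstar_m : jstar ≤ m := by
      by_contra h
      have hmstar_le : mstar ≤ m ⊔ jstar := hmstar.1 (left_lt_sup.2 h)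
      exact Decomp.not_le_sup_of_inf_le hjB hjstar_cov.lt hinf
        (le_sup_left.trans (hsup.le.trans hmstar_le))
    exact hinf.antisymm (le_inf hjstar_cov.le hjstar_m)
  · intro hinf_eq
    have hcov : m ⋖ j ⊔ m := Decomp.covBy_sup_of_forall_lt_le hjB hnle fun ρ hρ =>
      (hjstar.1 hρ).trans (hinf_eq ▸ inf_le_right)
    exact ((hcov.eq_or_eq hmstar_cov.le (hmstar.1 hcov.lt)).resolve_left hmstar_cov.ne').symm
end
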